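/- Let J be a nonempty finite index set and N, M ∈ ℕ. Let M_u ∈ ℝ^{N×N} be symmetric positive definite, K_u ∈ ℝ^{N×N} symmetric positive semidefinite, and for each k ∈ J let M_k ∈ ℝ^{M×M} be symmetric positive definite, K_k, C_k^e ∈ ℝ^{M×M} symmetric positive semidefinite, B_k ∈ ℝ^{M×N}, and for all j,k ∈ J let C_{kj} ∈ ℝ^{M×M} be symmetric positive semidefinite with C_{kj} = C_{jk}. Let μ_u > 0 and μ_k > 0 satisfy ⟨M_u x, x⟩ ≥ μ_u |x|² for all x ∈ ℝ^N and ⟨M_k y, y⟩ ≥ μ_k |y|² for all y ∈ ℝ^M. Let T > 0, U ∈ C²([0,T]; ℝ^N), P_k ∈ C¹([0,T]; ℝ^M), F ∈ C⁰([0,T]; ℝ^N), G_k ∈ C⁰([0,T]; ℝ^M), and assume for all t ∈ [0,T]: M_u U''(t) + K_u U(t) − Σ_{k∈J} B_kᵀ P_k(t) = F(t) and, for each k ∈ J, M_k P_k'(t) + B_k U'(t) + K_k P_k(t) + Σ_{j∈J} C_{kj}(P_k(t) − P_j(t)) + C_k^e P_k(t) = G_k(t). Define E(t) = ⟨M_u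 U'(t), U'(t)⟩ + ⟨K_u U(t), U(t)⟩ + Σ_{k∈J} ⟨M_k P_k(t), P_k(t)⟩. Then for every t̂ ∈ [0,T]: √(E(t̂)) ≤ √(E(0)) + ∫₀^{t̂} ( μ_u^{-1/2} |F(t)| + Σ_{k∈J} μ_k^{-1/2} |G_k(t)| ) dt, where |·| is the Euclidean norm and ⟨·,·⟩ the Euclidean inner product. -/

import Mathlib

/-!
Testing the displacement equation with `U'` and the `k`-th pressure equation with `P k`, the
coupling terms `B k` cancel, while `Kk k`, `Ce k` and, after symmetrising over `(k, j)`, the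
transfer terms `C k j` only dissipate energy. Hence `E' ≤ 2 (F ⬝ U' + ∑ G k ⬝ P k)`, and by
Cauchy–Schwarz and the coercivity of `Mu`, `Mk k` this is at most `2 φ √E`, where `φ` is the
integrand of the estimate. Since `√E` may fail to be differentiable where `E` vanishes, one
integrates `(√(E + ε))' ≤ φ` instead and lets `ε → 0`.
-/

open Matrix Set Filter Topology

variable {n m ι : Type*} [Fintype n] [Fintype m] [Fintype ι]

theorem Matrix.dotProduct_le_sqrt_mul_sqrt (x y : n → ℝ) :
    x ⬝ᵥ y ≤ √(x ⬝ᵥ x) * √(y ⬝ᵥ y) := by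
  simpa only [dotProduct, sq] using Real.sum_mul_le_sqrt_mul_sqrt Finset.univ x y

theorem Matrix.dotProduct_le_of_mul_dotProduct_self_le {μ e : ℝ} (hμ : 0 < μ) {x : n → ℝ}
    (hx : μ * (x ⬝ᵥ x) ≤ e) (y : n → ℝ) :
    y ⬝ᵥ x ≤ (√μ)⁻¹ * √(y ⬝ᵥ y) * √e := by
  have hnorm : √(x ⬝ᵥ x) ≤ (√μ)⁻¹ * √e := by
    rw [← Real.sqrt_inv, ← Real.sqrt_mul (inv_nonneg.2 hμ.le)]
    exact Real.sqrt_le_sqrt (by rwa [inv_mul_eq_div, le_div_iff₀' hμ])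
  calc y ⬝ᵥ x ≤ √(y ⬝ᵥ y) * √(x ⬝ᵥ x) := dotProduct_le_sqrt_mul_sqrt y x
    _ ≤ √(y ⬝ᵥ y) * ((√μ)⁻¹ * √e) := by gcongr
    _ = (√μ)⁻¹ * √(y ⬝ᵥ y) * √e := by ring

theorem Matrix.PosSemidef.mulVec_dotProduct_self_nonneg {A : Matrix n n ℝ} (hA : A.PosSemidef)
    (x : n → ℝ) : 0 ≤ A *ᵥ x ⬝ᵥ x := by
  simpa [dotProduct_comm] using hA.dotProduct_mulVec_nonneg x

theorem Matrix.IsHermitian.mulVec_dotProduct_comm {A : Matrix n n ℝ} (hA : A.IsHermitian)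
    (x y : n → ℝ) : A *ᵥ x ⬝ᵥ y = A *ᵥ y ⬝ᵥ x := by
  rw [dotProduct_comm, dotProduct_mulVec, ← mulVec_transpose,
    ← conjTranspose_eq_transpose_of_trivial, hA]

theorem Matrix.transpose_mulVec_dotProduct (B : Matrix m n ℝ) (p : m → ℝ) (u : n → ℝ) :
    Bᵀ *ᵥ p ⬝ᵥ u = B *ᵥ u ⬝ᵥ p := by
  rw [mulVec_transpose, ← dotProduct_mulVec, dotProduct_comm]

theorem Matrix.sum_sum_mulVec_sub_dotProduct_nonneg {C : ι → ι → Matrix n n ℝ}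
    (hC : ∀ k j, (C k j).PosSemidef) (hCsymm : ∀ k j, C k j = C j k) (x : ι → n → ℝ) :
    0 ≤ ∑ k, ∑ j, C k j *ᵥ (x k - x j) ⬝ᵥ x k := by
  set S := ∑ k, ∑ j, C k j *ᵥ (x k - x j) ⬝ᵥ x k
  have hswap : S = ∑ k, ∑ j, C j k *ᵥ (x j - x k) ⬝ᵥ x j := Finset.sum_comm
  have hS : 2 * S = ∑ k, ∑ j, C k j *ᵥ (x k - x j) ⬝ᵥ (x k - x j) := by
    rw [two_mul]
    nth_rewrite 2 [hswap]
    simp only [S, ← Finset.sum_add_distrib]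
    refine Finset.sum_congr rfl fun k _ => Finset.sum_congr rfl fun j _ => ?_
    rw [hCsymm j k, dotProduct_sub, ← neg_sub (x k) (x j), mulVec_neg, neg_dotProduct]
    ring
  have : 0 ≤ 2 * S := hS ▸ Finset.sum_nonneg fun k _ => Finset.sum_nonneg fun j _ =>
    (hC k j).mulVec_dotProduct_self_nonneg _
  linarith

theorem mpet_energy_rate_le_work {Mu Ku : Matrix n n ℝ} {Mk Kk Ce : ι → Matrix m m ℝ}
    {B : ι → Matrix m n ℝ} {C : ι → ι → Matrix m m ℝ} (hKu : Ku.IsHermitian)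
    (hKk : ∀ k, (Kk k).PosSemidef) (hCe : ∀ k, (Ce k).PosSemidef)
    (hC : ∀ k j, (C k j).PosSemidef) (hCsymm : ∀ k j, C k j = C j k)
    {u v w f : n → ℝ} {p q g : ι → m → ℝ}
    (hf : Mu *ᵥ w + Ku *ᵥ u - ∑ k, (B k)ᵀ *ᵥ p k = f)
    (hg : ∀ k, Mk k *ᵥ q k + B k *ᵥ v + Kk k *ᵥ p k + ∑ j, C k j *ᵥ (p k - p j)
      + Ce k *ᵥ p k = g k) :
    Mu *ᵥ w ⬝ᵥ v + Ku *ᵥ v ⬝ᵥ u + ∑ k, Mk k *ᵥ q k ⬝ᵥ p k ≤ f ⬝ᵥ v + ∑ k, g k ⬝ᵥ p k := by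
  obtain rfl := hf
  obtain rfl : g = _ := funext fun k => (hg k).symm
  simp only [add_dotProduct, sub_dotProduct, sum_dotProduct, transpose_mulVec_dotProduct,
    Finset.sum_add_distrib, hKu.mulVec_dotProduct_comm v u]
  have := sum_sum_mulVec_sub_dotProduct_nonneg hC hCsymm p
  have := Finset.sum_nonneg fun k (_ : k ∈ Finset.univ) =>
    (hKk k).mulVec_dotProduct_self_nonneg (p k)
  have := Finset.sum_nonneg fun k (_ : k ∈ Finset.univ) =>
    (hCe k).mulVec_dotProduct_self_nonneg (p k)
  linarith

theorem mpet_work_le_mul_sqrt_energy {Mu Ku : Matrix n n ℝ} {Mk : ι → Matrix m m ℝ}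
    (hKu : Ku.PosSemidef) {μu : ℝ} {μ : ι → ℝ} (hμu : 0 < μu) (hμ : ∀ k, 0 < μ k)
    (hMu : ∀ x, μu * (x ⬝ᵥ x) ≤ Mu *ᵥ x ⬝ᵥ x) (hMk : ∀ k y, μ k * (y ⬝ᵥ y) ≤ Mk k *ᵥ y ⬝ᵥ y)
    (u v f : n → ℝ) (p g : ι → m → ℝ) :
    f ⬝ᵥ v + ∑ k, g k ⬝ᵥ p k
      ≤ ((√μu)⁻¹ * √(f ⬝ᵥ f) + ∑ k, (√(μ k))⁻¹ * √(g k ⬝ᵥ g k))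
        * √(Mu *ᵥ v ⬝ᵥ v + Ku *ᵥ u ⬝ᵥ u + ∑ k, Mk k *ᵥ p k ⬝ᵥ p k) := by
  set e := Mu *ᵥ v ⬝ᵥ v + Ku *ᵥ u ⬝ᵥ u + ∑ k, Mk k *ᵥ p k ⬝ᵥ p k
  have hMk_nonneg : ∀ k, 0 ≤ Mk k *ᵥ p k ⬝ᵥ p k := fun k =>
    (mul_nonneg (hμ k).le (dotProduct_star_self_nonneg (p k))).trans (hMk k (p k))
  have hMu_nonneg : 0 ≤ Mu *ᵥ v ⬝ᵥ v :=
    (mul_nonneg hμu.le (dotProduct_star_self_nonneg v)).trans (hMu v)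
  have hv : μu * (v ⬝ᵥ v) ≤ e := by
    have := Finset.sum_nonneg fun k (_ : k ∈ Finset.univ) => hMk_nonneg k
    linarith [hMu v, hKu.mulVec_dotProduct_self_nonneg u]
  have hp : ∀ k, μ k * (p k ⬝ᵥ p k) ≤ e := fun k => by
    have := Finset.single_le_sum (fun j _ => hMk_nonneg j) (Finset.mem_univ k)
    linarith [hMk k (p k), hMu_nonneg, hKu.mulVec_dotProduct_self_nonneg u]
  rw [add_mul, Finset.sum_mul]
  exact add_le_add (dotProduct_le_of_mul_dotProduct_self_le hμu hv f)
    (Finset.sum_le_sum fun k _ => dotProduct_le_of_mul_dotProduct_self_le (hμ k) (hp k) (g k))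

theorem ContinuousOn.dotProduct {α : Type*} [TopologicalSpace α] {f g : α → n → ℝ} {s : Set α}
    (hf : ContinuousOn f s) (hg : ContinuousOn g s) : ContinuousOn (fun t => f t ⬝ᵥ g t) s :=
  (continuous_fst.dotProduct continuous_snd).comp_continuousOn (hf.prodMk hg)

section Deriv

variable {f g : ℝ → n → ℝ} {f' g' : n → ℝ} {s : Set ℝ} {t : ℝ}

theorem HasDerivWithinAt.dotProduct (hf : HasDerivWithinAt f f' s t)
    (hg : HasDerivWithinAt g g' s t) :
    HasDerivWithinAt (fun τ => f τ ⬝ᵥ g τ) (f' ⬝ᵥ g t + f t ⬝ᵥ g') s t := by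
  have hfi := hasDerivWithinAt_pi.1 hf
  have hgi := hasDerivWithinAt_pi.1 hg
  have h := HasDerivWithinAt.fun_sum fun i (_ : i ∈ Finset.univ) => (hfi i).fun_mul (hgi i)
  exact h.congr_deriv Finset.sum_add_distrib

theorem HasDerivWithinAt.mulVec (A : Matrix m n ℝ) (hf : HasDerivWithinAt f f' s t) :
    HasDerivWithinAt (fun τ => A *ᵥ f τ) (A *ᵥ f') s t := by
  classical
  exact (LinearMap.toContinuousLinearMap (toLin' A)).hasFDerivAt.comp_hasDerivWithinAt t hf

theorem HasDerivWithinAt.mulVec_dotProduct_self {A : Matrix n n ℝ} (hA : A.IsHermitian)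
    (hf : HasDerivWithinAt f f' s t) :
    HasDerivWithinAt (fun τ => A *ᵥ f τ ⬝ᵥ f τ) (2 * (A *ᵥ f' ⬝ᵥ f t)) s t := by
  convert (hf.mulVec A).dotProduct hf using 1
  rw [hA.mulVec_dotProduct_comm (f t) f', two_mul]

end Deriv

theorem mpet_hasDerivWithinAt_energy {Mu Ku : Matrix n n ℝ} {Mk : ι → Matrix m m ℝ}
    (hMu : Mu.IsHermitian) (hKu : Ku.IsHermitian) (hMk : ∀ k, (Mk k).IsHermitian)
    {U U' U'' : ℝ → n → ℝ} {P P' : ι → ℝ → m → ℝ} {s : Set ℝ} {t : ℝ}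
    (hU : HasDerivWithinAt U (U' t) s t) (hU' : HasDerivWithinAt U' (U'' t) s t)
    (hP : ∀ k, HasDerivWithinAt (P k) (P' k t) s t) :
    HasDerivWithinAt
      (fun τ => Mu *ᵥ U' τ ⬝ᵥ U' τ + Ku *ᵥ U τ ⬝ᵥ U τ + ∑ k, Mk k *ᵥ P k τ ⬝ᵥ P k τ)
      (2 * (Mu *ᵥ U'' t ⬝ᵥ U' t + Ku *ᵥ U' t ⬝ᵥ U t + ∑ k, Mk k *ᵥ P' k t ⬝ᵥ P k t)) s t := by
  have hsum := HasDerivWithinAt.fun_sum fun k (_ : k ∈ Finset.univ) =>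
    (hP k).mulVec_dotProduct_self (hMk k)
  refine (((hU'.mulVec_dotProduct_self hMu).add (hU.mulVec_dotProduct_self hKu)).add
    hsum).congr_deriv ?_
  rw [← Finset.mul_sum]
  ring

theorem sqrt_add_le_sqrt_add_integral_of_hasDerivWithinAt {E E' φ : ℝ → ℝ} {a b ε : ℝ}
    (hab : a ≤ b) (hε : 0 < ε) (hE_nonneg : ∀ t ∈ Icc a b, 0 ≤ E t)
    (hE : ∀ t ∈ Icc a b, HasDerivWithinAt E (E' t) (Icc a b) t)
    (hφ : ContinuousOn φ (Icc a b)) (hφ_nonneg : ∀ t ∈ Icc a b, 0 ≤ φ t)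
    (hE' : ∀ t ∈ Icc a b, E' t ≤ 2 * φ t * √(E t)) :
    √(E b + ε) ≤ √(E a + ε) + ∫ t in a..b, φ t := by
  have hpos : ∀ t ∈ Icc a b, 0 < E t + ε := fun t ht => by linarith [hE_nonneg t ht]
  have hderiv : ∀ t ∈ Icc a b, HasDerivWithinAt (fun τ => √(E τ + ε))
      (E' t / (2 * √(E t + ε))) (Icc a b) t := fun t ht =>
    ((hE t ht).add_const ε).sqrt (hpos t ht).ne'
  have hslope : ∀ t ∈ Icc a b, E' t / (2 * √(E t + ε)) ≤ φ t := by
    intro t ht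
    have : √(E t) ≤ √(E t + ε) := Real.sqrt_le_sqrt (by linarith)
    rw [div_le_iff₀ (mul_pos two_pos (Real.sqrt_pos.2 (hpos t ht)))]
    nlinarith [hE' t ht, hφ_nonneg t ht]
  have := intervalIntegral.sub_le_integral_of_hasDeriv_right_of_le hab
    (fun t ht => (hderiv t ht).continuousWithinAt)
    (fun t ht => ((hderiv t (Ioo_subset_Icc_self ht)).hasDerivAt
      (Icc_mem_nhds ht.1 ht.2)).hasDerivWithinAt)
    hφ.integrableOn_Icc (fun t ht => hslope t (Ioo_subset_Icc_self ht))
  linarith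

theorem sqrt_le_sqrt_add_integral_of_hasDerivWithinAt {E E' φ : ℝ → ℝ} {a b : ℝ}
    (hab : a ≤ b) (hE_nonneg : ∀ t ∈ Icc a b, 0 ≤ E t)
    (hE : ∀ t ∈ Icc a b, HasDerivWithinAt E (E' t) (Icc a b) t)
    (hφ : ContinuousOn φ (Icc a b)) (hφ_nonneg : ∀ t ∈ Icc a b, 0 ≤ φ t)
    (hE' : ∀ t ∈ Icc a b, E' t ≤ 2 * φ t * √(E t)) :
    √(E b) ≤ √(E a) + ∫ t in a..b, φ t := by
  have hlim : Tendsto (fun ε => √(E a + ε) + ∫ t in a..b, φ t) (𝓝[>] 0)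
      (𝓝 (√(E a) + ∫ t in a..b, φ t)) := by
    have hcont : Continuous fun ε => √(E a + ε) + ∫ t in a..b, φ t := by fun_prop
    simpa only [add_zero] using (hcont.tendsto 0).mono_left nhdsWithin_le_nhds
  refine ge_of_tendsto hlim (eventually_nhdsWithin_of_forall fun ε (hε : 0 < ε) => ?_)
  calc √(E b) ≤ √(E b + ε) := Real.sqrt_le_sqrt (by linarith)
    _ ≤ _ := sqrt_add_le_sqrt_add_integral_of_hasDerivWithinAt hab hε hE_nonneg hE hφ
      hφ_nonneg hE'

theorem mpet_semidiscrete_stability_general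
    (J : Type) [Fintype J] (N M : ℕ)
    (Mu : Matrix (Fin N) (Fin N) ℝ) (hMu : Mu.PosDef)
    (Ku : Matrix (Fin N) (Fin N) ℝ) (hKu : Ku.PosSemidef)
    (Mk : J → Matrix (Fin M) (Fin M) ℝ) (hMk : ∀ k, (Mk k).PosDef)
    (Kk : J → Matrix (Fin M) (Fin M) ℝ) (hKk : ∀ k, (Kk k).PosSemidef)
    (Ce : J → Matrix (Fin M) (Fin M) ℝ) (hCe : ∀ k, (Ce k).PosSemidef)
    (B : J → Matrix (Fin M) (Fin N) ℝ)
    (C : J → J → Matrix (Fin M) (Fin M) ℝ) (hC : ∀ k j, (C k j).PosSemidef)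
    (hCsym : ∀ k j, C k j = C j k)
    (μu : ℝ) (hμu : 0 < μu) (μ : J → ℝ) (hμ : ∀ k, 0 < μ k)
    (hMuCoer : ∀ x : Fin N → ℝ, μu * (x ⬝ᵥ x) ≤ Mu.mulVec x ⬝ᵥ x)
    (hMkCoer : ∀ k, ∀ y : Fin M → ℝ, μ k * (y ⬝ᵥ y) ≤ (Mk k).mulVec y ⬝ᵥ y)
    (T : ℝ)
    (U U' U'' : ℝ → Fin N → ℝ)
    (P P' : J → ℝ → Fin M → ℝ)
    (F : ℝ → Fin N → ℝ) (G : J → ℝ → Fin M → ℝ)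
    (hU : ∀ t ∈ Set.Icc 0 T, HasDerivWithinAt U (U' t) (Set.Icc 0 T) t)
    (hU' : ∀ t ∈ Set.Icc 0 T, HasDerivWithinAt U' (U'' t) (Set.Icc 0 T) t)
    (hP : ∀ k, ∀ t ∈ Set.Icc 0 T, HasDerivWithinAt (P k) (P' k t) (Set.Icc 0 T) t)
    (hF : ContinuousOn F (Set.Icc 0 T))
    (hG : ∀ k, ContinuousOn (G k) (Set.Icc 0 T))
    (heq1 : ∀ t ∈ Set.Icc 0 T,
      Mu.mulVec (U'' t) + Ku.mulVec (U t) - ∑ k, (B k)ᵀ.mulVec (P k t) = F t)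
    (heq2 : ∀ k, ∀ t ∈ Set.Icc 0 T,
      (Mk k).mulVec (P' k t) + (B k).mulVec (U' t) + (Kk k).mulVec (P k t)
        + (∑ j, (C k j).mulVec (P k t - P j t)) + (Ce k).mulVec (P k t) = G k t)
    (E : ℝ → ℝ)
    (hE : ∀ t, E t = Mu.mulVec (U' t) ⬝ᵥ U' t + Ku.mulVec (U t) ⬝ᵥ U t
      + ∑ k, (Mk k).mulVec (P k t) ⬝ᵥ P k t)
    (tHat : ℝ) (htHat : tHat ∈ Set.Icc 0 T) :
    Real.sqrt (E tHat) ≤ Real.sqrt (E 0) +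
      ∫ t in (0:ℝ)..tHat,
        ((Real.sqrt μu)⁻¹ * Real.sqrt (F t ⬝ᵥ F t)
          + ∑ k, (Real.sqrt (μ k))⁻¹ * Real.sqrt (G k t ⬝ᵥ G k t)) := by
  obtain rfl : E = _ := funext hE
  have hsub : Icc 0 tHat ⊆ Icc 0 T := Icc_subset_Icc le_rfl htHat.2
  refine sqrt_le_sqrt_add_integral_of_hasDerivWithinAt htHat.1 (fun t _ => ?_)
    (fun t ht => (mpet_hasDerivWithinAt_energy hMu.1 hKu.1 (fun k => (hMk k).1)
      (hU t (hsub ht)) (hU' t (hsub ht)) (fun k => hP k t (hsub ht))).mono hsub)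
    (ContinuousOn.mono ?_ hsub) (fun t _ => by positivity) (fun t ht => ?_)
  · exact add_nonneg (add_nonneg (hMu.posSemidef.mulVec_dotProduct_self_nonneg _)
      (hKu.mulVec_dotProduct_self_nonneg _))
      (Finset.sum_nonneg fun k _ => (hMk k).posSemidef.mulVec_dotProduct_self_nonneg _)
  · exact (continuousOn_const.mul (hF.dotProduct hF).sqrt).add
      (continuousOn_finsetSum _ fun k _ => continuousOn_const.mul ((hG k).dotProduct (hG k)).sqrt)
  · have hpower := mpet_energy_rate_le_work hKu.1 hKk hCe hC hCsym (heq1 t (hsub ht))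
      (fun k => heq2 k t (hsub ht))
    have hforcing := mpet_work_le_mul_sqrt_energy hKu hμu hμ hMuCoer hMkCoer (U t) (U' t) (F t)
      (fun k => P k t) (fun k => G k t)
    linarith

/-- Stability estimate (Theorem 1 of the paper) for the semi-discrete dynamic
MPET system in algebraic form: for every `tHat ∈ [0,T]`,
`√E(tHat) ≤ √E(0) + ∫₀^{tHat} (μ_u^{-1/2} |F(t)| + ∑_k μ_k^{-1/2} |G_k(t)|) dt`,
where `|·|` is the Euclidean norm (so `|x| = √(x ⬝ᵥ x)`). -/
theorem mpet_semidiscrete_stability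
    (J : Type) [Fintype J] [Nonempty J] (N M : ℕ)
    (Mu : Matrix (Fin N) (Fin N) ℝ) (hMu : Mu.PosDef)
    (Ku : Matrix (Fin N) (Fin N) ℝ) (hKu : Ku.PosSemidef)
    (Mk : J → Matrix (Fin M) (Fin M) ℝ) (hMk : ∀ k, (Mk k).PosDef)
    (Kk : J → Matrix (Fin M) (Fin M) ℝ) (hKk : ∀ k, (Kk k).PosSemidef)
    (Ce : J → Matrix (Fin M) (Fin M) ℝ) (hCe : ∀ k, (Ce k).PosSemidef)
    (B : J → Matrix (Fin M) (Fin N) ℝ)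
    (C : J → J → Matrix (Fin M) (Fin M) ℝ) (hC : ∀ k j, (C k j).PosSemidef)
    (hCsym : ∀ k j, C k j = C j k)
    (μu : ℝ) (hμu : 0 < μu) (μ : J → ℝ) (hμ : ∀ k, 0 < μ k)
    (hMuCoer : ∀ x : Fin N → ℝ, μu * (x ⬝ᵥ x) ≤ Mu.mulVec x ⬝ᵥ x)
    (hMkCoer : ∀ k, ∀ y : Fin M → ℝ, μ k * (y ⬝ᵥ y) ≤ (Mk k).mulVec y ⬝ᵥ y)
    (T : ℝ) (hT : 0 < T)
    (U U' U'' : ℝ → Fin N → ℝ)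
    (P P' : J → ℝ → Fin M → ℝ)
    (F : ℝ → Fin N → ℝ) (G : J → ℝ → Fin M → ℝ)
    (hU : ∀ t ∈ Set.Icc 0 T, HasDerivWithinAt U (U' t) (Set.Icc 0 T) t)
    (hU' : ∀ t ∈ Set.Icc 0 T, HasDerivWithinAt U' (U'' t) (Set.Icc 0 T) t)
    (hU'' : ContinuousOn U'' (Set.Icc 0 T))
    (hP : ∀ k, ∀ t ∈ Set.Icc 0 T, HasDerivWithinAt (P k) (P' k t) (Set.Icc 0 T) t)
    (hP' : ∀ k, ContinuousOn (P' k) (Set.Icc 0 T))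
    (hF : ContinuousOn F (Set.Icc 0 T))
    (hG : ∀ k, ContinuousOn (G k) (Set.Icc 0 T))
    (heq1 : ∀ t ∈ Set.Icc 0 T,
      Mu.mulVec (U'' t) + Ku.mulVec (U t) - ∑ k, (B k)ᵀ.mulVec (P k t) = F t)
    (heq2 : ∀ k, ∀ t ∈ Set.Icc 0 T,
      (Mk k).mulVec (P' k t) + (B k).mulVec (U' t) + (Kk k).mulVec (P k t)
        + (∑ j, (C k j).mulVec (P k t - P j t)) + (Ce k).mulVec (P k t) = G k t)
    (E : ℝ → ℝ)
    (hE : ∀ t, E t = Mu.mulVec (U' t) ⬝ᵥ U' t + Ku.mulVec (U t) ⬝ᵥ U t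
      + ∑ k, (Mk k).mulVec (P k t) ⬝ᵥ P k t)
    (tHat : ℝ) (htHat : tHat ∈ Set.Icc 0 T) :
    Real.sqrt (E tHat) ≤ Real.sqrt (E 0) +
      ∫ t in (0:ℝ)..tHat,
        ((Real.sqrt μu)⁻¹ * Real.sqrt (F t ⬝ᵥ F t)
          + ∑ k, (Real.sqrt (μ k))⁻¹ * Real.sqrt (G k t ⬝ᵥ G k t)) :=
  mpet_semidiscrete_stability_general J N M Mu hMu Ku hKu Mk hMk Kk hKk Ce hCe B C hC hCsym μu hμu μ
    hμ hMuCoer hMkCoer T U U' U'' P P' F G hU hU' hP hF hG heq1 heq2 E hE tHat htHat
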